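/- arXiv:cs/0604059 — 5 statements merged into one kernel-verified Lean document; each statement's English description precedes it below -/
import Mathlib

section
/- For any two lattice polygonal regions A and B in the plane, there exists a lattice polygonal region Q such that Q ⊆ A ∩ B and the Hausdorff distance between the complement of Q and the complement of (interior A) ∩ (interior B) is strictly less than √2, i.e., Metric.hausdorffDist (Qᶜ) (((interior A) ∩ (interior B))ᶜ) < Real.sqrt 2. -/
open Metric Set

/-- A point of the Euclidean plane is a *lattice point* if both its coordinates
are integers. -/
def IsLatticePoint (p : EuclideanSpace ℝ (Fin 2)) : Prop :=
  (∃ m : ℤ, p 0 = (m : ℝ)) ∧ (∃ k : ℤ, p 1 = (k : ℝ))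

/-- A *lattice polygonal region* is a finite union of closed triangles
(convex hulls of three-point sets) all of whose vertices are lattice points. -/
def IsLatticePolygonalRegion (P : Set (EuclideanSpace ℝ (Fin 2))) : Prop :=
  ∃ T : Finset (EuclideanSpace ℝ (Fin 2) × EuclideanSpace ℝ (Fin 2) × EuclideanSpace ℝ (Fin 2)),
    (∀ t ∈ T, IsLatticePoint t.1 ∧ IsLatticePoint t.2.1 ∧ IsLatticePoint t.2.2) ∧
    P = ⋃ t ∈ T, convexHull ℝ ({t.1, t.2.1, t.2.2} : Set (EuclideanSpace ℝ (Fin 2)))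

noncomputable def pt (a b : ℝ) : EuclideanSpace ℝ (Fin 2) :=
  (WithLp.equiv 2 (Fin 2 → ℝ)).symm ![a, b]

@[simp] lemma pt_zero (a b : ℝ) : pt a b 0 = a := rfl
@[simp] lemma pt_one (a b : ℝ) : pt a b 1 = b := rfl

lemma mem_hull3 {a b c : EuclideanSpace ℝ (Fin 2)} {α β γ : ℝ}
    (hα : 0 ≤ α) (hβ : 0 ≤ β) (hγ : 0 ≤ γ) (hsum : α + β + γ = 1) :
    α • a + β • b + γ • c ∈ convexHull ℝ ({a, b, c} : Set (EuclideanSpace ℝ (Fin 2))) := by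
  have := Finset.centerMass_mem_convexHull (t := (Finset.univ : Finset (Fin 3)))
    (w := ![α, β, γ]) (z := ![a, b, c]) (s := ({a, b, c} : Set (EuclideanSpace ℝ (Fin 2))))
    ?_ ?_ ?_
  · convert this using 1
    rw [Finset.centerMass]
    simp [Fin.sum_univ_three, hsum]
  · intro i _; fin_cases i <;> simpa
  · simp [Fin.sum_univ_three, hsum]
  · intro i _; fin_cases i <;> simp

def cell (z : ℤ × ℤ) : Set (EuclideanSpace ℝ (Fin 2)) :=
  {p | (z.1 : ℝ) ≤ p 0 ∧ p 0 ≤ z.1 + 1 ∧ (z.2 : ℝ) ≤ p 1 ∧ p 1 ≤ z.2 + 1}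

lemma convex_cell (z : ℤ × ℤ) : Convex ℝ (cell z) := by
  have h0 : IsLinearMap ℝ (fun p : EuclideanSpace ℝ (Fin 2) => p 0) :=
    ⟨fun x y => rfl, fun c x => rfl⟩
  have h1 : IsLinearMap ℝ (fun p : EuclideanSpace ℝ (Fin 2) => p 1) :=
    ⟨fun x y => rfl, fun c x => rfl⟩
  have : cell z = {p : EuclideanSpace ℝ (Fin 2) | (z.1 : ℝ) ≤ p 0} ∩
      ({p | p 0 ≤ z.1 + 1} ∩ ({p | (z.2 : ℝ) ≤ p 1} ∩ {p | p 1 ≤ z.2 + 1})) := by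
    ext p; simp only [cell, Set.mem_setOf_eq, Set.mem_inter_iff]
  rw [this]
  exact (convex_halfSpace_ge h0 _).inter ((convex_halfSpace_le h0 _).inter
    ((convex_halfSpace_ge h1 _).inter (convex_halfSpace_le h1 _)))

def tri1 (z : ℤ × ℤ) : Set (EuclideanSpace ℝ (Fin 2)) :=
  convexHull ℝ {pt z.1 z.2, pt (z.1+1) z.2, pt z.1 (z.2+1)}

def tri2 (z : ℤ × ℤ) : Set (EuclideanSpace ℝ (Fin 2)) :=
  convexHull ℝ {pt (z.1+1) (z.2+1), pt (z.1+1) z.2, pt z.1 (z.2+1)}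

lemma cell_eq_union (z : ℤ × ℤ) : cell z = tri1 z ∪ tri2 z := by
  obtain ⟨i, j⟩ := z
  apply Set.Subset.antisymm
  · intro p hp
    obtain ⟨h1, h2, h3, h4⟩ := hp
    set s := p 0 - (i : ℝ) with hs
    set t := p 1 - (j : ℝ) with ht
    have hs0 : 0 ≤ s := by simp [hs]; linarith
    have hs1 : s ≤ 1 := by simp [hs]; push_cast at h2 ⊢; linarith
    have ht0 : 0 ≤ t := by simp [ht]; linarith
    have ht1 : t ≤ 1 := by simp [ht]; push_cast at h4 ⊢; linarith
    rcases le_or_gt (s + t) 1 with hle | hgt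
    · left
      have hp' : p = (1 - s - t) • pt i j + s • pt (i+1) j + t • pt i (j+1) := by
        ext k
        fin_cases k <;> simp [PiLp.add_apply, PiLp.smul_apply, hs, ht] <;> push_cast <;> ring
      rw [tri1, hp']
      push_cast
      exact mem_hull3 (by linarith) hs0 ht0 (by ring)
    · right
      have hp' : p = (s + t - 1) • pt (i+1) (j+1) + (1 - t) • pt (i+1) j + (1 - s) • pt i (j+1) := by
        ext k
        fin_cases k <;> simp [PiLp.add_apply, PiLp.smul_apply, hs, ht] <;> push_cast <;> ring
      rw [tri2, hp']
      push_cast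
      exact mem_hull3 (by linarith) (by linarith) (by linarith) (by ring)
  · apply Set.union_subset <;>
    · apply convexHull_min _ (convex_cell _)
      intro x hx
      simp only [Set.mem_insert_iff, Set.mem_singleton_iff] at hx
      rcases hx with h | h | h <;> subst h <;>
        refine ⟨?_, ?_, ?_, ?_⟩ <;> simp <;> push_cast <;> linarith

lemma region_isCompact {P : Set (EuclideanSpace ℝ (Fin 2))}
    (h : IsLatticePolygonalRegion P) : IsCompact P := by
  obtain ⟨T, -, rfl⟩ := h
  apply T.finite_toSet.isCompact_biUnion
  intro t _
  exact (Set.toFinite _).isCompact_convexHull (𝕜 := ℝ)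

lemma coord_le_dist (x y : EuclideanSpace ℝ (Fin 2)) (k : Fin 2) :
    |x k - y k| ≤ dist x y := by
  have h1 : dist (x k) (y k) ^ 2 ≤ ∑ i, dist (x i) (y i) ^ 2 :=
    Finset.single_le_sum (f := fun i => dist (x i) (y i) ^ 2)
      (fun i _ => sq_nonneg _) (Finset.mem_univ k)
  have h2 := Real.sqrt_le_sqrt h1
  rwa [Real.sqrt_sq dist_nonneg, ← EuclideanSpace.dist_eq, Real.dist_eq] at h2

lemma dist_le_sqrt_two {x y : EuclideanSpace ℝ (Fin 2)}
    (h0 : |x 0 - y 0| ≤ 1) (h1 : |x 1 - y 1| ≤ 1) : dist x y ≤ Real.sqrt 2 := by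
  rw [EuclideanSpace.dist_eq]
  apply Real.sqrt_le_sqrt
  rw [Fin.sum_univ_two, Real.dist_eq, Real.dist_eq]
  have a0 := abs_nonneg (x 0 - y 0)
  have a1 := abs_nonneg (x 1 - y 1)
  nlinarith

/-- Lemma `hausdorff`: there is an inner rounding `Q ⊆ A ∩ B` with
`d_H(Qᶜ, ((interior A) ∩ (interior B))ᶜ) < √2`. -/
theorem inner_rounding_hausdorff
    (A B : Set (EuclideanSpace ℝ (Fin 2)))
    (hA : IsLatticePolygonalRegion A) (hB : IsLatticePolygonalRegion B) :
    ∃ Q : Set (EuclideanSpace ℝ (Fin 2)), IsLatticePolygonalRegion Q ∧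
      Q ⊆ A ∩ B ∧
      Metric.hausdorffDist (Qᶜ) ((interior A ∩ interior B)ᶜ) < Real.sqrt 2 := by
  classical
  have sqrt2_pos : (0 : ℝ) < Real.sqrt 2 := Real.sqrt_pos.mpr (by norm_num)
  set C : Set (EuclideanSpace ℝ (Fin 2)) := interior A ∩ interior B with hCdef
  have hCsub : C ⊆ A ∩ B := Set.inter_subset_inter interior_subset interior_subset
  have hABc : IsCompact (A ∩ B) := ((region_isCompact hA).inter_right
    (region_isCompact hB).isClosed)
  -- bound the region in a box
  obtain ⟨R, hR⟩ := hABc.isBounded.subset_closedBall 0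
  obtain ⟨N, hNR⟩ := exists_nat_ge R
  have hbox : ∀ p ∈ A ∩ B, |p 0| ≤ (N : ℝ) ∧ |p 1| ≤ (N : ℝ) := by
    intro p hp
    have hd : dist p 0 ≤ R := mem_closedBall.mp (hR hp)
    constructor
    · have := coord_le_dist p 0 0
      simpa using this.trans (hd.trans hNR)
    · have := coord_le_dist p 0 1
      simpa using this.trans (hd.trans hNR)
  -- the finite set of good cells
  set S : Finset (ℤ × ℤ) :=
    (Finset.Icc (-(N : ℤ), -(N : ℤ)) ((N : ℤ), (N : ℤ))).filter (fun z => cell z ⊆ A ∩ B)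
    with hSdef
  set Q : Set (EuclideanSpace ℝ (Fin 2)) := ⋃ z ∈ S, cell z with hQdef
  have hQsub : Q ⊆ A ∩ B := by
    apply Set.iUnion₂_subset
    intro z hz
    exact (Finset.mem_filter.mp hz).2
  have hQ_all : ∀ z : ℤ × ℤ, cell z ⊆ A ∩ B → cell z ⊆ Q := by
    intro z hz
    have hzmem : z ∈ S := by
      refine Finset.mem_filter.mpr ⟨?_, hz⟩
      have hcorner : pt z.1 z.2 ∈ cell z := by
        refine ⟨le_refl _, ?_, le_refl _, ?_⟩ <;> simp
      have hb := hbox _ (hz hcorner)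
      simp only [pt_zero, pt_one] at hb
      obtain ⟨hb1, hb2⟩ := hb
      rw [abs_le] at hb1 hb2
      have c1 : -(N : ℤ) ≤ z.1 := by exact_mod_cast hb1.1
      have c2 : z.1 ≤ (N : ℤ) := by exact_mod_cast hb1.2
      have c3 : -(N : ℤ) ≤ z.2 := by exact_mod_cast hb2.1
      have c4 : z.2 ≤ (N : ℤ) := by exact_mod_cast hb2.2
      exact Finset.mem_Icc.mpr ⟨⟨c1, c3⟩, ⟨c2, c4⟩⟩
    exact Set.subset_biUnion_of_mem (u := fun z => cell z) hzmem
  -- Q is a lattice polygonal region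
  have hQreg : IsLatticePolygonalRegion Q := by
    refine ⟨S.image (fun z => (pt z.1 z.2, pt (z.1+1) z.2, pt z.1 (z.2+1))) ∪
      S.image (fun z => (pt (z.1+1) (z.2+1), pt (z.1+1) z.2, pt z.1 (z.2+1))), ?_, ?_⟩
    · intro t ht
      rw [Finset.mem_union, Finset.mem_image, Finset.mem_image] at ht
      rcases ht with ⟨z, _, rfl⟩ | ⟨z, _, rfl⟩
      · exact ⟨⟨⟨z.1, by simp⟩, ⟨z.2, by simp⟩⟩,
          ⟨⟨z.1 + 1, by push_cast; simp⟩, ⟨z.2, by simp⟩⟩,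
          ⟨⟨z.1, by simp⟩, ⟨z.2 + 1, by push_cast; simp⟩⟩⟩
      · exact ⟨⟨⟨z.1 + 1, by push_cast; simp⟩, ⟨z.2 + 1, by push_cast; simp⟩⟩,
          ⟨⟨z.1 + 1, by push_cast; simp⟩, ⟨z.2, by simp⟩⟩,
          ⟨⟨z.1, by simp⟩, ⟨z.2 + 1, by push_cast; simp⟩⟩⟩
    · ext x
      simp only [hQdef, Set.mem_iUnion, cell_eq_union, Set.mem_union, Finset.mem_union,
        Finset.mem_image, exists_prop]
      constructor
      · rintro ⟨z, hz, h | h⟩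
        · exact ⟨_, Or.inl ⟨z, hz, rfl⟩, h⟩
        · exact ⟨_, Or.inr ⟨z, hz, rfl⟩, h⟩
      · rintro ⟨t, ⟨z, hz, rfl⟩ | ⟨z, hz, rfl⟩, h⟩
        · exact ⟨z, hz, Or.inl h⟩
        · exact ⟨z, hz, Or.inr h⟩
  refine ⟨Q, hQreg, hQsub, ?_⟩
  -- key bound
  have key : ∃ r : ℝ, 0 ≤ r ∧ r < Real.sqrt 2 ∧ ∀ x ∈ Qᶜ, infDist x Cᶜ ≤ r := by
    set K := closure (Qᶜ ∩ C) with hKdef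
    by_cases hK : K.Nonempty
    · have hKcomp : IsCompact K := by
        apply Metric.isCompact_of_isClosed_isBounded isClosed_closure
        exact (hABc.isBounded.subset ((Set.inter_subset_right).trans hCsub)).closure
      obtain ⟨xb, hxbK, hmax'⟩ := hKcomp.exists_isMaxOn hK
        (Metric.continuous_infDist_pt Cᶜ).continuousOn
      have hmax : ∀ y ∈ K, infDist y Cᶜ ≤ infDist xb Cᶜ := fun y hy => hmax' hy
      refine ⟨infDist xb Cᶜ, Metric.infDist_nonneg, ?_, ?_⟩
      · by_contra hcon
        push_neg at hcon
        -- hcon : √2 ≤ infDist xb Cᶜ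
        have hball : ball xb (Real.sqrt 2) ⊆ C := by
          intro y hy
          by_contra hyC
          have hle := Metric.infDist_le_dist_of_mem (x := xb) (show y ∈ Cᶜ from hyC)
          rw [mem_ball'] at hy
          linarith
        have hcb : closedBall xb (Real.sqrt 2) ⊆ A ∩ B := by
          rw [← closure_ball xb (ne_of_gt sqrt2_pos)]
          exact (closure_mono (hball.trans hCsub)).trans
            (by rw [hABc.isClosed.closure_eq])
        have hcells : ∀ i j : ℤ, (i : ℝ) ≤ xb 0 → xb 0 ≤ i + 1 →
            (j : ℝ) ≤ xb 1 → xb 1 ≤ j + 1 → cell (i, j) ⊆ Q := by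
          intro i j hi1 hi2 hj1 hj2
          apply hQ_all
          intro p hp
          apply hcb
          rw [mem_closedBall]
          obtain ⟨hp1, hp2, hp3, hp4⟩ := hp
          apply dist_le_sqrt_two
          · rw [abs_le]; constructor <;> simp only at hp1 hp2 ⊢ <;> push_cast at hp1 hp2 <;> linarith
          · rw [abs_le]; constructor <;> simp only at hp3 hp4 ⊢ <;> push_cast at hp3 hp4 <;> linarith
        set δ : ℝ := min (min (xb 0 - (↑(⌈xb 0⌉ - 1))) ((↑⌊xb 0⌋ + 1) - xb 0))
            (min (xb 1 - (↑(⌈xb 1⌉ - 1))) ((↑⌊xb 1⌋ + 1) - xb 1)) with hδdef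
        have hδpos : 0 < δ := by
          apply lt_min <;> apply lt_min <;> push_cast
          · have := Int.ceil_lt_add_one (xb 0); linarith
          · have := Int.lt_floor_add_one (xb 0); linarith
          · have := Int.ceil_lt_add_one (xb 1); linarith
          · have := Int.lt_floor_add_one (xb 1); linarith
        have hball2 : ball xb δ ⊆ Q := by
          intro y hy
          rw [mem_ball'] at hy
          have h0 : |xb 0 - y 0| < δ := lt_of_le_of_lt (coord_le_dist xb y 0) hy
          have h1 : |xb 1 - y 1| < δ := lt_of_le_of_lt (coord_le_dist xb y 1) hy
          rw [abs_lt] at h0 h1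
          have hδ1 : δ ≤ xb 0 - (↑(⌈xb 0⌉ - 1)) := (min_le_left _ _).trans (min_le_left _ _)
          have hδ2 : δ ≤ (↑⌊xb 0⌋ + 1) - xb 0 := (min_le_left _ _).trans (min_le_right _ _)
          have hδ3 : δ ≤ xb 1 - (↑(⌈xb 1⌉ - 1)) := (min_le_right _ _).trans (min_le_left _ _)
          have hδ4 : δ ≤ (↑⌊xb 1⌋ + 1) - xb 1 := (min_le_right _ _).trans (min_le_right _ _)
          push_cast at hδ1 hδ2 hδ3 hδ4
          have hfc0 : (⌊xb 0⌋ : ℝ) ≤ ⌈xb 0⌉ := by exact_mod_cast Int.floor_le_ceil (xb 0)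
          have hfc1 : (⌊xb 1⌋ : ℝ) ≤ ⌈xb 1⌉ := by exact_mod_cast Int.floor_le_ceil (xb 1)
          have hic0 := Int.ceil_lt_add_one (xb 0)
          have hic1 := Int.ceil_lt_add_one (xb 1)
          have hif0 := Int.lt_floor_add_one (xb 0)
          have hif1 := Int.lt_floor_add_one (xb 1)
          have hle0 := Int.le_ceil (xb 0)
          have hle1 := Int.le_ceil (xb 1)
          have hfl0 := Int.floor_le (xb 0)
          have hfl1 := Int.floor_le (xb 1)
          rcases le_total (y 0) ((⌈xb 0⌉ : ℝ)) with hx | hx <;>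
            rcases le_total (y 1) ((⌈xb 1⌉ : ℝ)) with hy1 | hy1
          · refine hcells (⌈xb 0⌉ - 1) (⌈xb 1⌉ - 1) (by push_cast; linarith)
              (by push_cast; linarith) (by push_cast; linarith) (by push_cast; linarith)
              ⟨by push_cast; linarith, by push_cast; linarith,
               by push_cast; linarith, by push_cast; linarith⟩
          · refine hcells (⌈xb 0⌉ - 1) ⌊xb 1⌋ (by push_cast; linarith)
              (by push_cast; linarith) (by push_cast; linarith) (by push_cast; linarith)
              ⟨by push_cast; linarith, by push_cast; linarith,
               by push_cast; linarith, by push_cast; linarith⟩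
          · refine hcells ⌊xb 0⌋ (⌈xb 1⌉ - 1) (by push_cast; linarith)
              (by push_cast; linarith) (by push_cast; linarith) (by push_cast; linarith)
              ⟨by push_cast; linarith, by push_cast; linarith,
               by push_cast; linarith, by push_cast; linarith⟩
          · refine hcells ⌊xb 0⌋ ⌊xb 1⌋ (by push_cast; linarith)
              (by push_cast; linarith) (by push_cast; linarith) (by push_cast; linarith)
              ⟨by push_cast; linarith, by push_cast; linarith,
               by push_cast; linarith, by push_cast; linarith⟩
        have hxcl : xb ∈ closure Qᶜ := closure_mono Set.inter_subset_left hxbK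
        rw [Metric.mem_closure_iff] at hxcl
        obtain ⟨y, hyQ, hyd⟩ := hxcl δ hδpos
        exact hyQ (hball2 (by rwa [mem_ball']))
      · intro x hx
        by_cases hxC : x ∈ C
        · exact hmax x (subset_closure ⟨hx, hxC⟩)
        · rw [Metric.infDist_zero_of_mem (show x ∈ Cᶜ from hxC)]
          exact Metric.infDist_nonneg
    · refine ⟨0, le_refl _, sqrt2_pos, ?_⟩
      intro x hx
      have hxC : x ∈ Cᶜ := by
        intro hxC
        exact hK ⟨x, subset_closure ⟨hx, hxC⟩⟩
      rw [Metric.infDist_zero_of_mem hxC]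
  obtain ⟨r, hr0, hr2, hbound⟩ := key
  have h2 : ∀ x ∈ Cᶜ, infDist x Qᶜ ≤ r := by
    intro x hx
    have hxint : x ∉ interior (A ∩ B) := by
      rw [interior_inter]; exact hx
    have hxcl : x ∈ closure Qᶜ := by
      have h1 : x ∈ closure ((A ∩ B)ᶜ) := by
        rw [closure_compl]
        exact hxint
      exact closure_mono (Set.compl_subset_compl.mpr hQsub) h1
    have : infDist x Qᶜ = 0 := by
      rw [← Metric.infDist_closure]
      exact Metric.infDist_zero_of_mem hxcl
    rw [this]; exact hr0
  calc Metric.hausdorffDist Qᶜ Cᶜ ≤ r :=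
        Metric.hausdorffDist_le_of_infDist hr0 hbound h2
    _ < Real.sqrt 2 := hr2
end

section
/- For any two lattice polygonal regions A and B in the plane whose intersection A ∩ B is nonempty, there exists a lattice polygonal region Q (an outer rounding of A ∩ B) such that A ∩ B ⊆ Q and every point x of Q lies at Euclidean distance strictly less than √2 from A ∩ B (i.e., Metric.infDist x (A ∩ B) < Real.sqrt 2); equivalently, Metric.hausdorffDist Q (A ∩ B) < Real.sqrt 2. -/
section OuterRoundingAux

abbrev E2' := EuclideanSpace ℝ (Fin 2)

lemma OuterRounding.coord_comb_bound {s t xv yv l u : ℝ} (hs : 0 ≤ s) (ht : 0 ≤ t)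
    (hst : s + t = 1) (h1 : l ≤ xv) (h2 : xv ≤ u) (h3 : l ≤ yv) (h4 : yv ≤ u) :
    l ≤ s * xv + t * yv ∧ s * xv + t * yv ≤ u := by
  have e : s * l + t * l = l := by rw [← add_mul, hst, one_mul]
  have e' : s * u + t * u = u := by rw [← add_mul, hst, one_mul]
  constructor
  · linarith [mul_le_mul_of_nonneg_left h1 hs, mul_le_mul_of_nonneg_left h3 ht]
  · linarith [mul_le_mul_of_nonneg_left h2 hs, mul_le_mul_of_nonneg_left h4 ht]

lemma OuterRounding.box_convex (l0 u0 l1 u1 : ℝ) :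
    Convex ℝ {x : E2' | l0 ≤ x 0 ∧ x 0 ≤ u0 ∧ l1 ≤ x 1 ∧ x 1 ≤ u1} := by
  intro x hx y hy s t hs ht hst
  simp only [Set.mem_setOf_eq] at *
  have h0 : (s • x + t • y) 0 = s * x 0 + t * y 0 := rfl
  have h1 : (s • x + t • y) 1 = s * x 1 + t * y 1 := rfl
  rw [h0, h1]
  obtain ⟨c1, c2⟩ := OuterRounding.coord_comb_bound hs ht hst hx.1 hx.2.1 hy.1 hy.2.1
  obtain ⟨c3, c4⟩ := OuterRounding.coord_comb_bound hs ht hst hx.2.2.1 hx.2.2.2 hy.2.2.1 hy.2.2.2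
  exact ⟨c1, c2, c3, c4⟩

lemma OuterRounding.tri_subset_box {a b c : E2'} {l0 u0 l1 u1 : ℝ}
    (ha : l0 ≤ a 0 ∧ a 0 ≤ u0 ∧ l1 ≤ a 1 ∧ a 1 ≤ u1)
    (hb : l0 ≤ b 0 ∧ b 0 ≤ u0 ∧ l1 ≤ b 1 ∧ b 1 ≤ u1)
    (hc : l0 ≤ c 0 ∧ c 0 ≤ u0 ∧ l1 ≤ c 1 ∧ c 1 ≤ u1) :
    convexHull ℝ ({a, b, c} : Set E2') ⊆
      {x : E2' | l0 ≤ x 0 ∧ x 0 ≤ u0 ∧ l1 ≤ x 1 ∧ x 1 ≤ u1} := by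
  apply convexHull_min
  · rintro p (rfl | rfl | rfl) <;> assumption
  · exact OuterRounding.box_convex l0 u0 l1 u1

lemma OuterRounding.comb_mem_tri {a b c : E2'} {α β γ : ℝ} (hα : 0 ≤ α) (hβ : 0 ≤ β)
    (hγ : 0 ≤ γ) (hsum : α + β + γ = 1) :
    α • a + β • b + γ • c ∈ convexHull ℝ ({a, b, c} : Set E2') := by
  have h := (convex_convexHull ℝ ({a, b, c} : Set E2')).sum_mem
    (t := (Finset.univ : Finset (Fin 3))) (w := ![α, β, γ]) (z := ![a, b, c])
    (by intro i _; fin_cases i <;> simpa) (by simp [Fin.sum_univ_three, hsum])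
    (by intro i _; fin_cases i <;> exact subset_convexHull ℝ _ (by simp))
  simpa [Fin.sum_univ_three] using h

lemma OuterRounding.dist_lt_sqrt_two {x y : E2'} (h0 : |x 0 - y 0| < 1)
    (h1 : |x 1 - y 1| < 1) : dist x y < Real.sqrt 2 := by
  rw [EuclideanSpace.dist_eq, Fin.sum_univ_two]
  apply Real.sqrt_lt_sqrt (by positivity)
  simp [Real.dist_eq]
  nlinarith [abs_lt.1 h0, abs_lt.1 h1]

noncomputable def OuterRounding.lpt (m k : ℤ) : E2' := WithLp.toLp 2 ![(m:ℝ), (k:ℝ)]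

namespace OuterRounding

@[simp] lemma lpt0 (m k : ℤ) : lpt m k 0 = m := rfl
@[simp] lemma lpt1 (m k : ℤ) : lpt m k 1 = k := rfl

lemma lpt_lattice (m k : ℤ) : IsLatticePoint (lpt m k) := ⟨⟨m, rfl⟩, ⟨k, rfl⟩⟩

noncomputable def triOf (m k : ℤ) : Fin 5 → E2' × E2' × E2'
| 0 => (lpt m k, lpt (m+1) k, lpt m (k+1))
| 1 => (lpt (m+1) (k+1), lpt (m+1) k, lpt m (k+1))
| 2 => (lpt m k, lpt (m+1) k, lpt (m+1) k)
| 3 => (lpt m k, lpt m (k+1), lpt m (k+1))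
| 4 => (lpt m k, lpt m k, lpt m k)

lemma triOf_lattice (m k : ℤ) (j : Fin 5) : IsLatticePoint (triOf m k j).1 ∧
    IsLatticePoint (triOf m k j).2.1 ∧ IsLatticePoint (triOf m k j).2.2 := by
  fin_cases j <;> exact ⟨lpt_lattice _ _, lpt_lattice _ _, lpt_lattice _ _⟩

def condOf (S : Set E2') (m k : ℤ) : Fin 5 → Prop
| 0 => ∃ y ∈ S, (m:ℝ) < y 0 ∧ y 0 < m+1 ∧ (k:ℝ) < y 1 ∧ y 1 < k+1
| 1 => ∃ y ∈ S, (m:ℝ) < y 0 ∧ y 0 < m+1 ∧ (k:ℝ) < y 1 ∧ y 1 < k+1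
| 2 => ∃ y ∈ S, (m:ℝ) < y 0 ∧ y 0 < m+1 ∧ y 1 = k
| 3 => ∃ y ∈ S, y 0 = m ∧ (k:ℝ) < y 1 ∧ y 1 < k+1
| 4 => lpt m k ∈ S

noncomputable def hullOf (t : E2' × E2' × E2') : Set E2' :=
  convexHull ℝ ({t.1, t.2.1, t.2.2} : Set E2')

lemma comb_apply (α β γ : ℝ) (a b c : E2') (i : Fin 2) :
    (α • a + β • b + γ • c) i = α * a i + β * b i + γ * c i := rfl

lemma e2_ext {x z : E2'} (h0 : x 0 = z 0) (h1 : x 1 = z 1) : x = z := by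
  ext i
  fin_cases i
  · exact h0
  · exact h1

lemma piece_dist (S : Set E2') (m k : ℤ) (j : Fin 5) (hc : condOf S m k j) {x : E2'}
    (hx : x ∈ hullOf (triOf m k j)) : ∃ y ∈ S, dist x y < Real.sqrt 2 := by
  fin_cases j
  · obtain ⟨y, hyS, a1, a2, a3, a4⟩ := hc
    have hbox := tri_subset_box (l0 := (m:ℝ)) (u0 := (m:ℝ)+1) (l1 := (k:ℝ)) (u1 := (k:ℝ)+1)
      (a := lpt m k) (b := lpt (m+1) k) (c := lpt m (k+1))
      (by push_cast [lpt0, lpt1]; try norm_num) (by push_cast [lpt0, lpt1]; try norm_num)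
      (by push_cast [lpt0, lpt1]; try norm_num) hx
    obtain ⟨b1, b2, b3, b4⟩ := hbox
    exact ⟨y, hyS, dist_lt_sqrt_two (abs_lt.2 ⟨by linarith, by linarith⟩)
      (abs_lt.2 ⟨by linarith, by linarith⟩)⟩
  · obtain ⟨y, hyS, a1, a2, a3, a4⟩ := hc
    have hbox := tri_subset_box (l0 := (m:ℝ)) (u0 := (m:ℝ)+1) (l1 := (k:ℝ)) (u1 := (k:ℝ)+1)
      (a := lpt (m+1) (k+1)) (b := lpt (m+1) k) (c := lpt m (k+1))
      (by push_cast [lpt0, lpt1]; try norm_num) (by push_cast [lpt0, lpt1]; try norm_num)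
      (by push_cast [lpt0, lpt1]; try norm_num) hx
    obtain ⟨b1, b2, b3, b4⟩ := hbox
    exact ⟨y, hyS, dist_lt_sqrt_two (abs_lt.2 ⟨by linarith, by linarith⟩)
      (abs_lt.2 ⟨by linarith, by linarith⟩)⟩
  · obtain ⟨y, hyS, a1, a2, a3⟩ := hc
    have hbox := tri_subset_box (l0 := (m:ℝ)) (u0 := (m:ℝ)+1) (l1 := (k:ℝ)) (u1 := (k:ℝ))
      (a := lpt m k) (b := lpt (m+1) k) (c := lpt (m+1) k)
      (by push_cast [lpt0, lpt1]; try norm_num) (by push_cast [lpt0, lpt1]; try norm_num)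
      (by push_cast [lpt0, lpt1]; try norm_num) hx
    obtain ⟨b1, b2, b3, b4⟩ := hbox
    exact ⟨y, hyS, dist_lt_sqrt_two (abs_lt.2 ⟨by linarith, by linarith⟩)
      (abs_lt.2 ⟨by rw [a3]; linarith, by rw [a3]; linarith⟩)⟩
  · obtain ⟨y, hyS, a1, a2, a3⟩ := hc
    have hbox := tri_subset_box (l0 := (m:ℝ)) (u0 := (m:ℝ)) (l1 := (k:ℝ)) (u1 := (k:ℝ)+1)
      (a := lpt m k) (b := lpt m (k+1)) (c := lpt m (k+1))
      (by push_cast [lpt0, lpt1]; try norm_num) (by push_cast [lpt0, lpt1]; try norm_num)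
      (by push_cast [lpt0, lpt1]; try norm_num) hx
    obtain ⟨b1, b2, b3, b4⟩ := hbox
    exact ⟨y, hyS, dist_lt_sqrt_two (abs_lt.2 ⟨by rw [a1]; linarith, by rw [a1]; linarith⟩)
      (abs_lt.2 ⟨by linarith, by linarith⟩)⟩
  · have hbox := tri_subset_box (l0 := (m:ℝ)) (u0 := (m:ℝ)) (l1 := (k:ℝ)) (u1 := (k:ℝ))
      (a := lpt m k) (b := lpt m k) (c := lpt m k)
      (by simp) (by simp) (by simp) hx
    obtain ⟨b1, b2, b3, b4⟩ := hbox
    refine ⟨lpt m k, hc, dist_lt_sqrt_two ?_ ?_⟩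
    · simp only [lpt0]; rw [abs_lt]; constructor <;> linarith
    · simp only [lpt1]; rw [abs_lt]; constructor <;> linarith

lemma cover (S : Set E2') {y : E2'} (hy : y ∈ S) :
    ∃ m k : ℤ, (m:ℝ) ≤ y 0 ∧ y 0 ≤ m + 1 ∧ (k:ℝ) ≤ y 1 ∧ y 1 ≤ k + 1 ∧
      ∃ j, condOf S m k j ∧ y ∈ hullOf (triOf m k j) := by
  have hm1 : (⌊y 0⌋:ℝ) ≤ y 0 := Int.floor_le _
  have hm2 : y 0 < (⌊y 0⌋:ℝ) + 1 := Int.lt_floor_add_one (y 0)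
  have hk1 : (⌊y 1⌋:ℝ) ≤ y 1 := Int.floor_le _
  have hk2 : y 1 < (⌊y 1⌋:ℝ) + 1 := Int.lt_floor_add_one (y 1)
  refine ⟨⌊y 0⌋, ⌊y 1⌋, hm1, le_of_lt hm2, hk1, le_of_lt hk2, ?_⟩
  set m := ⌊y 0⌋
  set k := ⌊y 1⌋
  rcases eq_or_lt_of_le hm1 with hu | hu <;> rcases eq_or_lt_of_le hk1 with hv | hv
  · -- vertex
    have hyeq : y = lpt m k := e2_ext (by rw [← hu]; rfl) (by rw [← hv]; rfl)
    refine ⟨4, ?_, ?_⟩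
    · show lpt m k ∈ S; rwa [← hyeq]
    · show y ∈ convexHull ℝ ({lpt m k, lpt m k, lpt m k} : Set E2')
      exact subset_convexHull ℝ _ (by simp [hyeq])
  · -- vertical edge
    refine ⟨3, ⟨y, hy, hu.symm, hv, hk2⟩, ?_⟩
    show y ∈ convexHull ℝ ({lpt m k, lpt m (k+1), lpt m (k+1)} : Set E2')
    have hyeq : y = (1 - (y 1 - k)) • lpt m k + (y 1 - k) • lpt m (k+1)
        + (0:ℝ) • lpt m (k+1) := by
      refine e2_ext ?_ ?_ <;> rw [comb_apply] <;> simp only [lpt0, lpt1] <;> push_cast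
      · rw [← hu]; ring
      · ring
    rw [hyeq]
    exact comb_mem_tri (by linarith) (by linarith) le_rfl (by ring)
  · -- horizontal edge
    refine ⟨2, ⟨y, hy, hu, hm2, hv.symm⟩, ?_⟩
    show y ∈ convexHull ℝ ({lpt m k, lpt (m+1) k, lpt (m+1) k} : Set E2')
    have hyeq : y = (1 - (y 0 - m)) • lpt m k + (y 0 - m) • lpt (m+1) k
        + (0:ℝ) • lpt (m+1) k := by
      refine e2_ext ?_ ?_ <;> rw [comb_apply] <;> simp only [lpt0, lpt1] <;> push_cast
      · ring
      · rw [← hv]; ring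
    rw [hyeq]
    exact comb_mem_tri (by linarith) (by linarith) le_rfl (by ring)
  · -- interior of square
    set u := y 0 - (m:ℝ) with hudef
    set v := y 1 - (k:ℝ) with hvdef
    have hu0 : 0 < u := by simp [hudef]; linarith
    have hu1 : u < 1 := by simp [hudef]; linarith
    have hv0 : 0 < v := by simp [hvdef]; linarith
    have hv1 : v < 1 := by simp [hvdef]; linarith
    rcases le_or_gt (u + v) 1 with hs | hs
    · refine ⟨0, ⟨y, hy, hu, hm2, hv, hk2⟩, ?_⟩
      show y ∈ convexHull ℝ ({lpt m k, lpt (m+1) k, lpt m (k+1)} : Set E2')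
      have hyeq : y = (1 - u - v) • lpt m k + u • lpt (m+1) k + v • lpt m (k+1) := by
        refine e2_ext ?_ ?_ <;> rw [comb_apply] <;> simp only [lpt0, lpt1] <;> push_cast <;>
          rw [hudef, hvdef] <;> ring
      rw [hyeq]
      exact comb_mem_tri (by linarith) (by linarith) (by linarith) (by ring)
    · refine ⟨1, ⟨y, hy, hu, hm2, hv, hk2⟩, ?_⟩
      show y ∈ convexHull ℝ ({lpt (m+1) (k+1), lpt (m+1) k, lpt m (k+1)} : Set E2')
      have hyeq : y = (u + v - 1) • lpt (m+1) (k+1) + (1 - v) • lpt (m+1) k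
          + (1 - u) • lpt m (k+1) := by
        refine e2_ext ?_ ?_ <;> rw [comb_apply] <;> simp only [lpt0, lpt1] <;> push_cast <;>
          rw [hudef, hvdef] <;> ring
      rw [hyeq]
      exact comb_mem_tri (by linarith) (by linarith) (by linarith) (by ring)

lemma region_compact {P : Set E2'} (hP : IsLatticePolygonalRegion P) : IsCompact P := by
  obtain ⟨T, -, rfl⟩ := hP
  exact T.isCompact_biUnion (fun t _ =>
    (((Set.finite_singleton t.2.2).insert t.2.1).insert t.1).isCompact_convexHull ℝ)

lemma abs_coord_le_norm (y : E2') (i : Fin 2) : |y i| ≤ ‖y‖ := by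
  rw [EuclideanSpace.norm_eq, ← Real.sqrt_sq_eq_abs]
  apply Real.sqrt_le_sqrt
  calc y i ^ 2 ≤ ∑ j, y j ^ 2 := Finset.single_le_sum (f := fun j => y j ^ 2)
        (fun j _ => sq_nonneg _) (Finset.mem_univ i)
    _ = ∑ j, ‖y j‖ ^ 2 := by simp [Real.norm_eq_abs, sq_abs]

end OuterRounding

end OuterRoundingAux

/-- Outer rounding of an intersection of lattice polygonal regions:
it is a lattice polygonal region containing `A ∩ B`, every point of which
is at distance less than `√2` from `A ∩ B`; equivalently the Hausdorff
distance between `Q` and `A ∩ B` is less than `√2`. -/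
theorem outer_rounding_of_intersection
    (A B : Set (EuclideanSpace ℝ (Fin 2)))
    (hA : IsLatticePolygonalRegion A) (hB : IsLatticePolygonalRegion B)
    (hAB : (A ∩ B).Nonempty) :
    ∃ Q : Set (EuclideanSpace ℝ (Fin 2)), IsLatticePolygonalRegion Q ∧
      A ∩ B ⊆ Q ∧
      (∀ x ∈ Q, Metric.infDist x (A ∩ B) < Real.sqrt 2) ∧
      Metric.hausdorffDist Q (A ∩ B) < Real.sqrt 2 := by
  classical
  open OuterRounding in
  set S : Set E2' := A ∩ B with hSdef
  have hScomp : IsCompact S :=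
    (OuterRounding.region_compact hA).inter_right (OuterRounding.region_compact hB).isClosed
  obtain ⟨R, hR⟩ := hScomp.isBounded.subset_closedBall (0 : E2')
  set N : ℤ := ⌈R⌉ with hNdef
  have hRN : R ≤ (N:ℝ) := Int.le_ceil R
  have hbound : ∀ y ∈ S, ∀ i : Fin 2, |y i| ≤ (N:ℝ) := by
    intro y hyS i
    have := hR hyS
    rw [Metric.mem_closedBall, dist_zero_right] at this
    exact le_trans (OuterRounding.abs_coord_le_norm y i) (le_trans this hRN)
  set I : Finset (ℤ × ℤ) :=
    Finset.Icc (-(N+1)) (N+1) ×ˢ Finset.Icc (-(N+1)) (N+1) with hIdef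
  set T' : Finset ((ℤ × ℤ) × Fin 5) :=
    (I ×ˢ (Finset.univ : Finset (Fin 5))).filter
      (fun z => OuterRounding.condOf S z.1.1 z.1.2 z.2) with hT'def
  set T : Finset (E2' × E2' × E2') :=
    T'.image (fun z => OuterRounding.triOf z.1.1 z.1.2 z.2) with hTdef
  refine ⟨⋃ t ∈ T, convexHull ℝ ({t.1, t.2.1, t.2.2} : Set E2'), ⟨T, ?_, rfl⟩, ?_, ?_, ?_⟩
  · -- lattice vertices
    intro t ht
    rw [hTdef, Finset.mem_image] at ht
    obtain ⟨z, _, rfl⟩ := ht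
    exact OuterRounding.triOf_lattice z.1.1 z.1.2 z.2
  · -- S ⊆ Q
    intro y hy
    obtain ⟨m, k, b1, b2, b3, b4, j, hcond, hmem⟩ := OuterRounding.cover S hy
    have hy0 := hbound y hy 0
    have hy1 := hbound y hy 1
    have habs0 := abs_le.1 hy0
    have habs1 := abs_le.1 hy1
    have hmI : m ∈ Finset.Icc (-(N+1)) (N+1) := by
      rw [Finset.mem_Icc]
      constructor
      · have : (-(N:ℝ)) - 1 ≤ (m:ℝ) := by linarith
        exact_mod_cast (by push_cast; linarith : ((-(N+1) : ℤ) : ℝ) ≤ (m:ℝ))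
      · exact_mod_cast (by push_cast; linarith : ((m:ℝ) ≤ ((N+1 : ℤ) : ℝ)))
    have hkI : k ∈ Finset.Icc (-(N+1)) (N+1) := by
      rw [Finset.mem_Icc]
      constructor
      · exact_mod_cast (by push_cast; linarith : ((-(N+1) : ℤ) : ℝ) ≤ (k:ℝ))
      · exact_mod_cast (by push_cast; linarith : ((k:ℝ) ≤ ((N+1 : ℤ) : ℝ)))
    have hzT' : ((m, k), j) ∈ T' := by
      rw [hT'def, Finset.mem_filter]
      exact ⟨Finset.mem_product.2 ⟨Finset.mem_product.2 ⟨hmI, hkI⟩, Finset.mem_univ j⟩, hcond⟩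
    have htT : OuterRounding.triOf m k j ∈ T := by
      rw [hTdef, Finset.mem_image]
      exact ⟨((m, k), j), hzT', rfl⟩
    exact Set.mem_biUnion htT hmem
  · -- strict distance bound
    intro x hx
    simp only [Set.mem_iUnion] at hx
    obtain ⟨t, ht, hxt⟩ := hx
    rw [hTdef, Finset.mem_image] at ht
    obtain ⟨z, hz, rfl⟩ := ht
    rw [hT'def, Finset.mem_filter] at hz
    obtain ⟨y, hyS, hdist⟩ := OuterRounding.piece_dist S z.1.1 z.1.2 z.2 hz.2 hxt
    exact lt_of_le_of_lt (Metric.infDist_le_dist_of_mem hyS) hdist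
  · -- Hausdorff distance
    set Q : Set E2' := ⋃ t ∈ T, convexHull ℝ ({t.1, t.2.1, t.2.2} : Set E2') with hQdef
    have hstrict : ∀ x ∈ Q, Metric.infDist x S < Real.sqrt 2 := by
      intro x hx
      rw [hQdef] at hx
      simp only [Set.mem_iUnion] at hx
      obtain ⟨t, ht, hxt⟩ := hx
      rw [hTdef, Finset.mem_image] at ht
      obtain ⟨z, hz, rfl⟩ := ht
      rw [hT'def, Finset.mem_filter] at hz
      obtain ⟨y, hyS, hdist⟩ := OuterRounding.piece_dist S z.1.1 z.1.2 z.2 hz.2 hxt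
      exact lt_of_le_of_lt (Metric.infDist_le_dist_of_mem hyS) hdist
    have hSQ : S ⊆ Q := by
      intro y hy
      obtain ⟨m, k, b1, b2, b3, b4, j, hcond, hmem⟩ := OuterRounding.cover S hy
      have hy0 := hbound y hy 0
      have hy1 := hbound y hy 1
      have habs0 := abs_le.1 hy0
      have habs1 := abs_le.1 hy1
      have hmI : m ∈ Finset.Icc (-(N+1)) (N+1) := by
        rw [Finset.mem_Icc]
        constructor
        · exact_mod_cast (by push_cast; linarith : ((-(N+1) : ℤ) : ℝ) ≤ (m:ℝ))
        · exact_mod_cast (by push_cast; linarith : ((m:ℝ) ≤ ((N+1 : ℤ) : ℝ)))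
      have hkI : k ∈ Finset.Icc (-(N+1)) (N+1) := by
        rw [Finset.mem_Icc]
        constructor
        · exact_mod_cast (by push_cast; linarith : ((-(N+1) : ℤ) : ℝ) ≤ (k:ℝ))
        · exact_mod_cast (by push_cast; linarith : ((k:ℝ) ≤ ((N+1 : ℤ) : ℝ)))
      have hzT' : ((m, k), j) ∈ T' := by
        rw [hT'def, Finset.mem_filter]
        exact ⟨Finset.mem_product.2 ⟨Finset.mem_product.2 ⟨hmI, hkI⟩, Finset.mem_univ j⟩, hcond⟩
      have htT : OuterRounding.triOf m k j ∈ T := by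
        rw [hTdef, Finset.mem_image]
        exact ⟨((m, k), j), hzT', rfl⟩
      exact Set.mem_biUnion htT hmem
    have hQcomp : IsCompact Q := by
      rw [hQdef]
      exact T.isCompact_biUnion (fun t _ =>
        (((Set.finite_singleton t.2.2).insert t.2.1).insert t.1).isCompact_convexHull ℝ)
    have hQne : Q.Nonempty := hAB.mono hSQ
    obtain ⟨x0, hx0Q, hmax⟩ := hQcomp.exists_isMaxOn hQne
      (Metric.continuous_infDist_pt S).continuousOn
    have hle : Metric.hausdorffDist Q S ≤ Metric.infDist x0 S := by
      apply Metric.hausdorffDist_le_of_infDist Metric.infDist_nonneg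
      · intro x hx
        exact hmax hx
      · intro y hy
        rw [Metric.infDist_zero_of_mem (hSQ hy)]
        exact Metric.infDist_nonneg
    exact lt_of_le_of_lt hle (hstrict x0 hx0Q)
end

section
/- For every polygonal region P in the plane (a finite union of closed triangles with arbitrary real vertices), there exists a lattice polygonal region Q (an inner rounding of P) such that Q ⊆ P and every point x of P \ Q satisfies Metric.infDist x (Pᶜ) < Real.sqrt 2. -/
/-- A *polygonal region* is a finite union of closed triangles with
arbitrary real vertices. -/
def IsPolygonalRegion (P : Set (EuclideanSpace ℝ (Fin 2))) : Prop :=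
  ∃ T : Finset (EuclideanSpace ℝ (Fin 2) × EuclideanSpace ℝ (Fin 2) × EuclideanSpace ℝ (Fin 2)),
    P = ⋃ t ∈ T, convexHull ℝ ({t.1, t.2.1, t.2.2} : Set (EuclideanSpace ℝ (Fin 2)))


noncomputable abbrev Epl := EuclideanSpace ℝ (Fin 2)

noncomputable def ptE (m k : ℤ) : Epl := WithLp.toLp 2 ![(m : ℝ), (k : ℝ)]

@[simp] lemma ptE_zero (m k : ℤ) : ptE m k 0 = (m : ℝ) := rfl
@[simp] lemma ptE_one (m k : ℤ) : ptE m k 1 = (k : ℝ) := rfl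

/-- the closed lattice square -/
def sqE (m k : ℤ) : Set Epl :=
  {x | (m : ℝ) ≤ x 0 ∧ x 0 ≤ m + 1 ∧ (k : ℝ) ≤ x 1 ∧ x 1 ≤ k + 1}

lemma combo_bound {lo hi u v a b : ℝ} (hu : lo ≤ u) (hu' : u ≤ hi) (hv : lo ≤ v)
    (hv' : v ≤ hi) (ha : 0 ≤ a) (hb : 0 ≤ b) (hab : a + b = 1) :
    lo ≤ a * u + b * v ∧ a * u + b * v ≤ hi := by
  have elo : a * lo + b * lo = lo := by rw [← add_mul, hab, one_mul]
  have ehi : a * hi + b * hi = hi := by rw [← add_mul, hab, one_mul]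
  constructor <;>
    nlinarith [mul_le_mul_of_nonneg_left hu ha, mul_le_mul_of_nonneg_left hu' ha,
      mul_le_mul_of_nonneg_left hv hb, mul_le_mul_of_nonneg_left hv' hb]

lemma convex_sqE (m k : ℤ) : Convex ℝ (sqE m k) := by
  intro x hx y hy a b ha hb hab
  obtain ⟨h1, h2, h3, h4⟩ := hx
  obtain ⟨h1', h2', h3', h4'⟩ := hy
  have e0 : (a • x + b • y : Epl) 0 = a * x 0 + b * y 0 := rfl
  have e1 : (a • x + b • y : Epl) 1 = a * x 1 + b * y 1 := rfl
  have c0 := combo_bound h1 h2 h1' h2' ha hb hab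
  have c1 := combo_bound h3 h4 h3' h4' ha hb hab
  exact ⟨e0 ▸ c0.1, e0 ▸ c0.2, e1 ▸ c1.1, e1 ▸ c1.2⟩

lemma combo_mem_hull (a b c : Epl) (w1 w2 w3 : ℝ) (h1 : 0 ≤ w1) (h2 : 0 ≤ w2)
    (h3 : 0 ≤ w3) (hs : w1 + w2 + w3 = 1) :
    w1 • a + w2 • b + w3 • c ∈ convexHull ℝ ({a, b, c} : Set Epl) := by
  have := Finset.centerMass_mem_convexHull (s := ({a, b, c} : Set Epl))
    (Finset.univ : Finset (Fin 3)) (w := ![w1, w2, w3]) (z := ![a, b, c])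
    (by intro i _; fin_cases i <;> simpa) (by simp [Fin.sum_univ_three, hs])
    (by intro i _; fin_cases i <;> simp)
  simpa [Finset.centerMass, Fin.sum_univ_three, hs] using this

lemma ptE_mem_sqE_corner (m k : ℤ) : ptE m k ∈ sqE m k := by
  refine ⟨le_refl _, by simp, le_refl _, by simp⟩

lemma corners_mem (m k : ℤ) :
    ptE m k ∈ sqE m k ∧ ptE (m+1) k ∈ sqE m k ∧ ptE m (k+1) ∈ sqE m k ∧
      ptE (m+1) (k+1) ∈ sqE m k := by
  refine ⟨⟨le_refl _, by simp, le_refl _, by simp⟩, ⟨by push_cast; simp, by push_cast; simp,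
    le_refl _, by simp⟩, ⟨le_refl _, by simp, by push_cast; simp, by push_cast; simp⟩,
    ⟨by push_cast; simp, by push_cast; simp, by push_cast; simp, by push_cast; simp⟩⟩

lemma tri1_sub (m k : ℤ) :
    convexHull ℝ ({ptE m k, ptE (m+1) k, ptE m (k+1)} : Set Epl) ⊆ sqE m k := by
  apply convexHull_min _ (convex_sqE m k)
  obtain ⟨c1, c2, c3, _⟩ := corners_mem m k
  rintro x (rfl | rfl | rfl) <;> assumption

lemma tri2_sub (m k : ℤ) :
    convexHull ℝ ({ptE (m+1) (k+1), ptE (m+1) k, ptE m (k+1)} : Set Epl) ⊆ sqE m k := by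
  apply convexHull_min _ (convex_sqE m k)
  obtain ⟨_, c2, c3, c4⟩ := corners_mem m k
  rintro x (rfl | rfl | rfl) <;> assumption

lemma sq_sub_tris (m k : ℤ) (x : Epl) (hx : x ∈ sqE m k) :
    x ∈ convexHull ℝ ({ptE m k, ptE (m+1) k, ptE m (k+1)} : Set Epl) ∪
      convexHull ℝ ({ptE (m+1) (k+1), ptE (m+1) k, ptE m (k+1)} : Set Epl) := by
  obtain ⟨h1, h2, h3, h4⟩ := hx
  set u : ℝ := x 0 - m with hu
  set v : ℝ := x 1 - k with hv
  rcases le_or_gt (u + v) 1 with hc | hc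
  · left
    have := combo_mem_hull (ptE m k) (ptE (m+1) k) (ptE m (k+1)) (1 - u - v) u v
      (by simp [hu, hv]; linarith) (by simp [hu]; linarith) (by simp [hv]; linarith)
      (by ring)
    convert this using 1
    ext i
    fin_cases i <;>
      simp [ptE, hu, hv, PiLp.add_apply, PiLp.smul_apply, smul_eq_mul] <;> push_cast <;> ring
  · right
    have := combo_mem_hull (ptE (m+1) (k+1)) (ptE (m+1) k) (ptE m (k+1)) (u + v - 1) (1 - v) (1 - u)
      (by linarith) (by simp [hv]; linarith) (by simp [hu]; linarith) (by ring)
    convert this using 1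
    ext i
    fin_cases i <;>
      simp [ptE, hu, hv, PiLp.add_apply, PiLp.smul_apply, smul_eq_mul] <;> push_cast <;> ring

lemma mem_sq_floor (x : Epl) : x ∈ sqE ⌊x 0⌋ ⌊x 1⌋ :=
  ⟨Int.floor_le _, (Int.lt_floor_add_one _).le, Int.floor_le _, (Int.lt_floor_add_one _).le⟩

lemma coord_le_norm (x : Epl) (i : Fin 2) : |x i| ≤ ‖x‖ := by
  rw [EuclideanSpace.norm_eq]
  rw [← Real.sqrt_sq_eq_abs]
  apply Real.sqrt_le_sqrt
  have : |x i| ^ 2 ≤ ∑ j, ‖x j‖ ^ 2 := by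
    have := Finset.single_le_sum (f := fun j => ‖x j‖ ^ 2)
      (fun j _ => by positivity) (Finset.mem_univ i)
    simpa [Real.norm_eq_abs, sq_abs] using this
  simpa [sq_abs] using this

lemma dist_sq_le (m k : ℤ) (x y : Epl) (hx : x ∈ sqE m k) (hy : y ∈ sqE m k) :
    dist x y ≤ Real.sqrt 2 := by
  obtain ⟨a1, a2, a3, a4⟩ := hx
  obtain ⟨b1, b2, b3, b4⟩ := hy
  rw [EuclideanSpace.dist_eq]
  apply Real.sqrt_le_sqrt
  have e0 : dist (x 0) (y 0) ^ 2 ≤ 1 := by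
    have h : |x 0 - y 0| ≤ 1 := abs_le.2 ⟨by linarith, by linarith⟩
    have := pow_le_pow_left₀ (abs_nonneg _) h 2
    simpa [Real.dist_eq] using this
  have e1 : dist (x 1) (y 1) ^ 2 ≤ 1 := by
    have h : |x 1 - y 1| ≤ 1 := abs_le.2 ⟨by linarith, by linarith⟩
    have := pow_le_pow_left₀ (abs_nonneg _) h 2
    simpa [Real.dist_eq] using this
  calc ∑ i, dist (x i) (y i) ^ 2 = dist (x 0) (y 0) ^ 2 + dist (x 1) (y 1) ^ 2 := by
        simp [Fin.sum_univ_two]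
    _ ≤ 2 := by linarith

lemma infdist_lt_of_close (P : Set Epl) (hcl : IsClosed P) (x : Epl) (hx : x ∈ P)
    (y : Epl) (hy : y ∉ P) (hd : dist x y ≤ Real.sqrt 2) :
    Metric.infDist x Pᶜ < Real.sqrt 2 := by
  have hop : IsOpen Pᶜ := hcl.isOpen_compl
  obtain ⟨ε, hε, hball⟩ := Metric.isOpen_iff.1 hop y hy
  have hxy : x ≠ y := fun h => hy (h ▸ hx)
  have hdpos : 0 < dist x y := dist_pos.2 hxy
  set d := dist x y with hdd
  set t := min (ε / (2 * d)) (1 / 2) with ht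
  have ht0 : 0 < t := lt_min (by positivity) (by norm_num)
  have ht1 : t < 1 := lt_of_le_of_lt (min_le_right _ _) (by norm_num)
  set y' := y + t • (x - y) with hy'
  have hsub : x - y' = (1 - t) • (x - y) := by
    rw [hy', sub_smul, one_smul]; abel
  have hsub2 : y' - y = t • (x - y) := by rw [hy']; abel
  have hy'P : y' ∈ Pᶜ := by
    apply hball
    rw [Metric.mem_ball, dist_eq_norm, hsub2, norm_smul, Real.norm_eq_abs,
      abs_of_pos ht0]
    have : t * ‖x - y‖ ≤ ε / (2 * d) * d := by
      rw [← dist_eq_norm, ← hdd]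
      exact mul_le_mul_of_nonneg_right (min_le_left _ _) hdpos.le
    have h2 : ε / (2 * d) * d = ε / 2 := by field_simp
    calc t * ‖x - y‖ ≤ ε / 2 := by rw [← h2]; exact this
      _ < ε := by linarith
  have hdist : dist x y' = (1 - t) * d := by
    rw [dist_eq_norm, hsub, norm_smul, Real.norm_eq_abs, abs_of_pos (by linarith),
      ← dist_eq_norm, ← hdd]
  calc Metric.infDist x Pᶜ ≤ dist x y' := Metric.infDist_le_dist_of_mem hy'P
    _ = (1 - t) * d := hdist
    _ < 1 * d := by apply mul_lt_mul_of_pos_right _ hdpos; linarith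
    _ = d := one_mul d
    _ ≤ Real.sqrt 2 := hd



/-- Section 8: inner rounding of a general polygonal region. -/
theorem inner_rounding_general
    (P : Set (EuclideanSpace ℝ (Fin 2))) (hP : IsPolygonalRegion P) :
    ∃ Q : Set (EuclideanSpace ℝ (Fin 2)), IsLatticePolygonalRegion Q ∧
      Q ⊆ P ∧
      ∀ x ∈ P \ Q, Metric.infDist x (Pᶜ) < Real.sqrt 2 := by
  classical
  obtain ⟨T₀, hT₀⟩ := hP
  -- P is compact, hence closed and bounded
  have hcomp : IsCompact P := by
    rw [hT₀]
    apply Set.Finite.isCompact_biUnion T₀.finite_toSet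
    intro t _
    exact (Set.toFinite _).isCompact_convexHull ℝ
  have hcl : IsClosed P := hcomp.isClosed
  obtain ⟨R, hR⟩ := hcomp.isBounded.exists_norm_le
  -- the set of lattice squares contained in P
  set F : Set (ℤ × ℤ) := {p | sqE p.1 p.2 ⊆ P} with hF
  have hFfin : F.Finite := by
    apply Set.Finite.subset ((Set.finite_Icc (-⌈R⌉) ⌈R⌉).prod (Set.finite_Icc (-⌈R⌉) ⌈R⌉))
    rintro ⟨m, k⟩ hp
    have hmem : ptE m k ∈ P := hp (ptE_mem_sqE_corner m k)
    have hnorm := hR _ hmem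
    have h0 : |(m : ℝ)| ≤ R := le_trans (coord_le_norm (ptE m k) 0) hnorm
    have h1 : |(k : ℝ)| ≤ R := le_trans (coord_le_norm (ptE m k) 1) hnorm
    rw [abs_le] at h0 h1
    have hRc : R ≤ (⌈R⌉ : ℝ) := Int.le_ceil R
    constructor <;> constructor
    · exact_mod_cast le_trans (by linarith : -(⌈R⌉:ℝ) ≤ (m:ℝ)) (le_refl _)
    · exact_mod_cast le_trans h0.2 hRc
    · exact_mod_cast le_trans (by linarith : -(⌈R⌉:ℝ) ≤ (k:ℝ)) (le_refl _)
    · exact_mod_cast le_trans h1.2 hRc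
  set Fs := hFfin.toFinset with hFs
  set tri1f : ℤ × ℤ → Epl × Epl × Epl :=
    fun p => (ptE p.1 p.2, ptE (p.1+1) p.2, ptE p.1 (p.2+1)) with htri1f
  set tri2f : ℤ × ℤ → Epl × Epl × Epl :=
    fun p => (ptE (p.1+1) (p.2+1), ptE (p.1+1) p.2, ptE p.1 (p.2+1)) with htri2f
  set T : Finset (Epl × Epl × Epl) := Fs.image tri1f ∪ Fs.image tri2f with hT
  set Q : Set Epl := ⋃ t ∈ T, convexHull ℝ ({t.1, t.2.1, t.2.2} : Set Epl) with hQ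
  have hlatt : ∀ t ∈ T, IsLatticePoint t.1 ∧ IsLatticePoint t.2.1 ∧ IsLatticePoint t.2.2 := by
    intro t ht
    rw [hT, Finset.mem_union] at ht
    rcases ht with ht | ht <;> obtain ⟨p, _, rfl⟩ := Finset.mem_image.1 ht <;>
      exact ⟨⟨⟨_, rfl⟩, ⟨_, rfl⟩⟩, ⟨⟨_, rfl⟩, ⟨_, rfl⟩⟩, ⟨⟨_, rfl⟩, ⟨_, rfl⟩⟩⟩
  have hQP : Q ⊆ P := by
    rw [hQ]
    apply Set.iUnion₂_subset
    intro t ht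
    rw [hT, Finset.mem_union] at ht
    rcases ht with ht | ht <;> obtain ⟨p, hpF, rfl⟩ := Finset.mem_image.1 ht <;>
      rw [hFs, Set.Finite.mem_toFinset] at hpF
    · exact le_trans (tri1_sub p.1 p.2) hpF
    · exact le_trans (tri2_sub p.1 p.2) hpF
  refine ⟨Q, ⟨T, hlatt, rfl⟩, hQP, ?_⟩
  rintro x ⟨hxP, hxQ⟩
  set m := ⌊x 0⌋
  set k := ⌊x 1⌋
  have hxsq : x ∈ sqE m k := mem_sq_floor x
  have hnsub : ¬ sqE m k ⊆ P := by
    intro hsub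
    apply hxQ
    have hmk : (m, k) ∈ Fs := by rw [hFs, Set.Finite.mem_toFinset]; exact hsub
    have h1T : tri1f (m, k) ∈ T := Finset.mem_union_left _ (Finset.mem_image_of_mem _ hmk)
    have h2T : tri2f (m, k) ∈ T := Finset.mem_union_right _ (Finset.mem_image_of_mem _ hmk)
    rcases sq_sub_tris m k x hxsq with h | h
    · exact Set.mem_biUnion h1T h
    · exact Set.mem_biUnion h2T h
  rw [Set.not_subset] at hnsub
  obtain ⟨y, hysq, hyP⟩ := hnsub
  exact infdist_lt_of_close P hcl x hxP y hyP (dist_sq_le m k x y hxsq hysq)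
end

section
/- For every nonempty polygonal region P in the plane (a finite union of closed triangles with arbitrary real vertices), there exists a lattice polygonal region Q (an outer rounding of P) such that P ⊆ Q and every point x of Q satisfies Metric.infDist x P < Real.sqrt 2; equivalently, Metric.hausdorffDist Q P < Real.sqrt 2. -/
/-- the lattice point with coordinates `(m, k)` -/
noncomputable def latPt (m k : ℤ) : EuclideanSpace ℝ (Fin 2) :=
  (WithLp.equiv 2 (Fin 2 → ℝ)).symm ![(m : ℝ), (k : ℝ)]

lemma latPt_apply0 (m k : ℤ) : latPt m k 0 = (m : ℝ) := rfl
lemma latPt_apply1 (m k : ℤ) : latPt m k 1 = (k : ℝ) := rfl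

lemma latPt_isLattice (m k : ℤ) : IsLatticePoint (latPt m k) :=
  ⟨⟨m, rfl⟩, ⟨k, rfl⟩⟩

lemma combo (x : ℝ) :
    (1 - Int.fract x) * (⌊x⌋ : ℝ) + Int.fract x * (⌈x⌉ : ℝ) = x := by
  by_cases h : Int.fract x = 0
  · have hx : ((⌊x⌋ : ℝ)) = x := by
      have := Int.self_sub_fract x
      rw [h, sub_zero] at this
      exact this.symm
    rw [h]
    simp [hx]
  · have hceil : ⌈x⌉ = ⌊x⌋ + 1 := by
      refine le_antisymm (Int.ceil_le_floor_add_one x) ?_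
      by_contra hc
      push_neg at hc
      have h1 : ⌈x⌉ ≤ ⌊x⌋ := by omega
      have h2 : x ≤ (⌊x⌋ : ℝ) := le_trans (Int.le_ceil x) (by exact_mod_cast h1)
      have h3 : (⌊x⌋ : ℝ) = x := le_antisymm (Int.floor_le x) h2
      exact h ((by rw [Int.fract, h3, sub_self]))
    have hu : Int.fract x = x - ⌊x⌋ := rfl
    rw [hceil]
    push_cast
    rw [hu]
    ring

lemma floor_ceil_mem {N : ℤ} {x : ℝ} (h : |x| ≤ (N : ℝ)) :
    ⌊x⌋ ∈ Finset.Icc (-N - 1) (N + 1) ∧ ⌈x⌉ ∈ Finset.Icc (-N - 1) (N + 1) := by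
  rw [abs_le] at h
  have h1 : -N ≤ ⌊x⌋ := Int.le_floor.2 (by exact_mod_cast h.1)
  have h2 : ⌊x⌋ ≤ N := by exact_mod_cast (Int.floor_le x).trans h.2
  have h3 : ⌈x⌉ ≤ N + 1 := (Int.ceil_le_floor_add_one x).trans (by omega)
  have h4 : -N ≤ ⌈x⌉ := h1.trans (Int.floor_le_ceil x)
  constructor <;> rw [Finset.mem_Icc] <;> omega

lemma dist_latPt_lt {p : EuclideanSpace ℝ (Fin 2)} {m k : ℤ}
    (h0 : |(m : ℝ) - p 0| < 1) (h1 : |(k : ℝ) - p 1| < 1) :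
    dist (latPt m k) p < Real.sqrt 2 := by
  rw [EuclideanSpace.dist_eq]
  apply Real.sqrt_lt_sqrt (Finset.sum_nonneg fun _ _ => sq_nonneg _)
  rw [Fin.sum_univ_two, latPt_apply0, latPt_apply1]
  have e0 : dist ((m : ℝ)) (p 0) ^ 2 < 1 := by
    rw [Real.dist_eq, sq_lt_one_iff_abs_lt_one, abs_abs]; exact h0
  have e1 : dist ((k : ℝ)) (p 1) ^ 2 < 1 := by
    rw [Real.dist_eq, sq_lt_one_iff_abs_lt_one, abs_abs]; exact h1
  linarith

lemma abs_floor_sub_lt (x : ℝ) : |(⌊x⌋ : ℝ) - x| < 1 := by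
  rw [abs_lt]
  constructor
  · linarith [Int.sub_one_lt_floor x]
  · linarith [Int.floor_le x]

lemma abs_ceil_sub_lt (x : ℝ) : |(⌈x⌉ : ℝ) - x| < 1 := by
  rw [abs_lt]
  constructor
  · linarith [Int.le_ceil x]
  · linarith [Int.ceil_lt_add_one x]

/-- Rounding a single point: membership in a lattice triangle within the open √2-ball. -/
lemma round_point (N : ℤ) (p : EuclideanSpace ℝ (Fin 2))
    (h0 : |p 0| ≤ (N : ℝ)) (h1 : |p 1| ≤ (N : ℝ)) :
    ∃ m1 k1 m2 k2 m3 k3 : ℤ,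
      m1 ∈ Finset.Icc (-N - 1) (N + 1) ∧ k1 ∈ Finset.Icc (-N - 1) (N + 1) ∧
      m2 ∈ Finset.Icc (-N - 1) (N + 1) ∧ k2 ∈ Finset.Icc (-N - 1) (N + 1) ∧
      m3 ∈ Finset.Icc (-N - 1) (N + 1) ∧ k3 ∈ Finset.Icc (-N - 1) (N + 1) ∧
      p ∈ convexHull ℝ ({latPt m1 k1, latPt m2 k2, latPt m3 k3} :
          Set (EuclideanSpace ℝ (Fin 2))) ∧
      convexHull ℝ ({latPt m1 k1, latPt m2 k2, latPt m3 k3} :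
          Set (EuclideanSpace ℝ (Fin 2))) ⊆ Metric.ball p (Real.sqrt 2) := by
  set u := Int.fract (p 0) with hu
  set v := Int.fract (p 1) with hv
  have hu0 : 0 ≤ u := Int.fract_nonneg _
  have hu1 : u < 1 := Int.fract_lt_one _
  have hv0 : 0 ≤ v := Int.fract_nonneg _
  have hv1 : v < 1 := Int.fract_lt_one _
  have key0 := combo (p 0)
  have key1 := combo (p 1)
  have hb0 := floor_ceil_mem h0
  have hb1 := floor_ceil_mem h1
  -- ball subset helper
  have ball_sub : ∀ m1 k1 m2 k2 m3 k3 : ℤ,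
      (m1 = ⌊p 0⌋ ∨ m1 = ⌈p 0⌉) → (k1 = ⌊p 1⌋ ∨ k1 = ⌈p 1⌉) →
      (m2 = ⌊p 0⌋ ∨ m2 = ⌈p 0⌉) → (k2 = ⌊p 1⌋ ∨ k2 = ⌈p 1⌉) →
      (m3 = ⌊p 0⌋ ∨ m3 = ⌈p 0⌉) → (k3 = ⌊p 1⌋ ∨ k3 = ⌈p 1⌉) →
      convexHull ℝ ({latPt m1 k1, latPt m2 k2, latPt m3 k3} :
          Set (EuclideanSpace ℝ (Fin 2))) ⊆ Metric.ball p (Real.sqrt 2) := by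
    intro m1 k1 m2 k2 m3 k3 hm1 hk1 hm2 hk2 hm3 hk3
    apply convexHull_min _ (convex_ball p (Real.sqrt 2))
    have H : ∀ m k : ℤ, (m = ⌊p 0⌋ ∨ m = ⌈p 0⌉) → (k = ⌊p 1⌋ ∨ k = ⌈p 1⌉) →
        latPt m k ∈ Metric.ball p (Real.sqrt 2) := by
      intro m k hm hk
      rw [Metric.mem_ball]
      apply dist_latPt_lt
      · rcases hm with h | h <;> rw [h]
        · exact abs_floor_sub_lt _
        · exact abs_ceil_sub_lt _
      · rcases hk with h | h <;> rw [h]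
        · exact abs_floor_sub_lt _
        · exact abs_ceil_sub_lt _
    rintro x (rfl | rfl | rfl)
    exacts [H _ _ hm1 hk1, H _ _ hm2 hk2, H _ _ hm3 hk3]
  rcases le_total v u with hle | hle
  · -- triangle (⌊⌋,⌊⌋), (⌈⌉,⌊⌋), (⌈⌉,⌈⌉) with weights (1-u, u-v, v)
    refine ⟨⌊p 0⌋, ⌊p 1⌋, ⌈p 0⌉, ⌊p 1⌋, ⌈p 0⌉, ⌈p 1⌉,
      hb0.1, hb1.1, hb0.2, hb1.1, hb0.2, hb1.2, ?_, ?_⟩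
    · have hconv := convex_convexHull ℝ
        ({latPt ⌊p 0⌋ ⌊p 1⌋, latPt ⌈p 0⌉ ⌊p 1⌋, latPt ⌈p 0⌉ ⌈p 1⌉} :
          Set (EuclideanSpace ℝ (Fin 2)))
      have hmem := hconv.sum_mem (t := (Finset.univ : Finset (Fin 3)))
        (w := ![1 - u, u - v, v])
        (z := ![latPt ⌊p 0⌋ ⌊p 1⌋, latPt ⌈p 0⌉ ⌊p 1⌋, latPt ⌈p 0⌉ ⌈p 1⌉])
        (by
          intro i _
          fin_cases i
          · show (0:ℝ) ≤ 1 - u; linarith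
          · show (0:ℝ) ≤ u - v; linarith
          · exact hv0)
        (by rw [Fin.sum_univ_three]; show (1 - u) + (u - v) + v = 1; ring)
        (by
          intro i _
          fin_cases i
          · exact subset_convexHull ℝ _ (Set.mem_insert _ _)
          · exact subset_convexHull ℝ _ (Set.mem_insert_of_mem _ (Set.mem_insert _ _))
          · exact subset_convexHull ℝ _ (Set.mem_insert_of_mem _ (Set.mem_insert_of_mem _ rfl)))
      have heq : ∑ i : Fin 3, (![1 - u, u - v, v] : Fin 3 → ℝ) i •
          (![latPt ⌊p 0⌋ ⌊p 1⌋, latPt ⌈p 0⌉ ⌊p 1⌋, latPt ⌈p 0⌉ ⌈p 1⌉] :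
            Fin 3 → EuclideanSpace ℝ (Fin 2)) i = p := by
        rw [Fin.sum_univ_three]
        ext i
        fin_cases i <;>
          simp [latPt_apply0, latPt_apply1, PiLp.add_apply, PiLp.smul_apply,
            smul_eq_mul]
        · linear_combination key0
        · linear_combination key1
      rwa [heq] at hmem
    · exact ball_sub _ _ _ _ _ _ (Or.inl rfl) (Or.inl rfl) (Or.inr rfl)
        (Or.inl rfl) (Or.inr rfl) (Or.inr rfl)
  · -- triangle (⌊⌋,⌊⌋), (⌊⌋,⌈⌉), (⌈⌉,⌈⌉) with weights (1-v, v-u, u)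
    refine ⟨⌊p 0⌋, ⌊p 1⌋, ⌊p 0⌋, ⌈p 1⌉, ⌈p 0⌉, ⌈p 1⌉,
      hb0.1, hb1.1, hb0.1, hb1.2, hb0.2, hb1.2, ?_, ?_⟩
    · have hconv := convex_convexHull ℝ
        ({latPt ⌊p 0⌋ ⌊p 1⌋, latPt ⌊p 0⌋ ⌈p 1⌉, latPt ⌈p 0⌉ ⌈p 1⌉} :
          Set (EuclideanSpace ℝ (Fin 2)))
      have hmem := hconv.sum_mem (t := (Finset.univ : Finset (Fin 3)))
        (w := ![1 - v, v - u, u])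
        (z := ![latPt ⌊p 0⌋ ⌊p 1⌋, latPt ⌊p 0⌋ ⌈p 1⌉, latPt ⌈p 0⌉ ⌈p 1⌉])
        (by
          intro i _
          fin_cases i
          · show (0:ℝ) ≤ 1 - v; linarith
          · show (0:ℝ) ≤ v - u; linarith
          · exact hu0)
        (by rw [Fin.sum_univ_three]; show (1 - v) + (v - u) + u = 1; ring)
        (by
          intro i _
          fin_cases i
          · exact subset_convexHull ℝ _ (Set.mem_insert _ _)
          · exact subset_convexHull ℝ _ (Set.mem_insert_of_mem _ (Set.mem_insert _ _))
          · exact subset_convexHull ℝ _ (Set.mem_insert_of_mem _ (Set.mem_insert_of_mem _ rfl)))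
      have heq : ∑ i : Fin 3, (![1 - v, v - u, u] : Fin 3 → ℝ) i •
          (![latPt ⌊p 0⌋ ⌊p 1⌋, latPt ⌊p 0⌋ ⌈p 1⌉, latPt ⌈p 0⌉ ⌈p 1⌉] :
            Fin 3 → EuclideanSpace ℝ (Fin 2)) i = p := by
        rw [Fin.sum_univ_three]
        ext i
        fin_cases i <;>
          simp [latPt_apply0, latPt_apply1, PiLp.add_apply, PiLp.smul_apply,
            smul_eq_mul]
        · linear_combination key0
        · linear_combination key1
      rwa [heq] at hmem
    · exact ball_sub _ _ _ _ _ _ (Or.inl rfl) (Or.inl rfl) (Or.inl rfl)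
        (Or.inr rfl) (Or.inr rfl) (Or.inr rfl)

lemma coord_abs_le_norm (p : EuclideanSpace ℝ (Fin 2)) (i : Fin 2) :
    |p i| ≤ ‖p‖ := by
  rw [EuclideanSpace.norm_eq, ← Real.sqrt_sq_eq_abs]
  apply Real.sqrt_le_sqrt
  have h1 := Finset.single_le_sum (f := fun j => ‖p j‖ ^ 2)
    (fun j _ => sq_nonneg _) (Finset.mem_univ i)
  simpa [Real.norm_eq_abs, sq_abs] using h1


/-- Section 8: outer rounding of a general nonempty polygonal region. -/
theorem outer_rounding_general
    (P : Set (EuclideanSpace ℝ (Fin 2))) (hP : IsPolygonalRegion P)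
    (hne : P.Nonempty) :
    ∃ Q : Set (EuclideanSpace ℝ (Fin 2)), IsLatticePolygonalRegion Q ∧
      P ⊆ Q ∧
      (∀ x ∈ Q, Metric.infDist x P < Real.sqrt 2) ∧
      Metric.hausdorffDist Q P < Real.sqrt 2 := by
  classical
  -- P is compact
  have hPc : IsCompact P := by
    obtain ⟨T0, rfl⟩ := hP
    exact T0.finite_toSet.isCompact_biUnion fun t _ =>
      ((Set.finite_singleton _).insert _ |>.insert _).isCompact_convexHull (𝕜 := ℝ)
  -- coordinate bound
  obtain ⟨R, hR⟩ := hPc.isBounded.subset_closedBall 0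
  set N : ℤ := ⌈max R 0⌉ with hN
  have hbound : ∀ p ∈ P, |p 0| ≤ (N : ℝ) ∧ |p 1| ≤ (N : ℝ) := by
    intro p hp
    have hnorm : ‖p‖ ≤ (N : ℝ) := by
      have h1 : dist p 0 ≤ R := hR hp
      rw [dist_zero_right] at h1
      calc ‖p‖ ≤ max R 0 := h1.trans (le_max_left _ _)
        _ ≤ (N : ℝ) := Int.le_ceil _
    exact ⟨(coord_abs_le_norm p 0).trans hnorm, (coord_abs_le_norm p 1).trans hnorm⟩
  -- candidate triangles
  set I : Finset ℤ := Finset.Icc (-N - 1) (N + 1) with hI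
  set allT : Finset (EuclideanSpace ℝ (Fin 2) × EuclideanSpace ℝ (Fin 2) ×
      EuclideanSpace ℝ (Fin 2)) :=
    ((I ×ˢ I) ×ˢ (I ×ˢ I) ×ˢ (I ×ˢ I)).image fun z =>
      (latPt z.1.1 z.1.2, latPt z.2.1.1 z.2.1.2, latPt z.2.2.1 z.2.2.2) with hallT
  set T : Finset (EuclideanSpace ℝ (Fin 2) × EuclideanSpace ℝ (Fin 2) ×
      EuclideanSpace ℝ (Fin 2)) :=
    allT.filter (fun t => ∀ y ∈ convexHull ℝ
      ({t.1, t.2.1, t.2.2} : Set (EuclideanSpace ℝ (Fin 2))),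
      Metric.infDist y P < Real.sqrt 2) with hT
  set Q : Set (EuclideanSpace ℝ (Fin 2)) :=
    ⋃ t ∈ T, convexHull ℝ ({t.1, t.2.1, t.2.2} : Set (EuclideanSpace ℝ (Fin 2)))
    with hQ
  have hPQ : P ⊆ Q := by
    intro p hp
    obtain ⟨m1, k1, m2, k2, m3, k3, hm1, hk1, hm2, hk2, hm3, hk3, hmem, hsub⟩ :=
      round_point N p (hbound p hp).1 (hbound p hp).2
    have htT : (latPt m1 k1, latPt m2 k2, latPt m3 k3) ∈ T := by
      rw [hT, Finset.mem_filter]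
      constructor
      · rw [hallT, Finset.mem_image]
        refine ⟨((m1, k1), (m2, k2), (m3, k3)), ?_, rfl⟩
        simp only [Finset.mem_product]
        exact ⟨⟨hm1, hk1⟩, ⟨hm2, hk2⟩, hm3, hk3⟩
      · intro y hy
        have := hsub hy
        rw [Metric.mem_ball] at this
        exact lt_of_le_of_lt (Metric.infDist_le_dist_of_mem hp) this
    exact Set.mem_biUnion htT hmem
  have hQgood : ∀ x ∈ Q, Metric.infDist x P < Real.sqrt 2 := by
    intro x hx
    rw [hQ] at hx
    obtain ⟨t, htT, hxt⟩ := Set.mem_iUnion₂.mp hx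
    exact (Finset.mem_filter.mp htT).2 x hxt
  refine ⟨Q, ?_, hPQ, hQgood, ?_⟩
  · refine ⟨T, ?_, rfl⟩
    intro t ht
    have := Finset.mem_filter.mp ht |>.1
    rw [hallT, Finset.mem_image] at this
    obtain ⟨z, _, rfl⟩ := this
    exact ⟨latPt_isLattice _ _, latPt_isLattice _ _, latPt_isLattice _ _⟩
  · -- Hausdorff distance
    have hQc : IsCompact Q :=
      T.finite_toSet.isCompact_biUnion fun t _ =>
        ((Set.finite_singleton _).insert _ |>.insert _).isCompact_convexHull (𝕜 := ℝ)
    have hQne : Q.Nonempty := hne.mono hPQ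
    obtain ⟨x₀, hx₀Q, hmax⟩ := hQc.exists_isMaxOn hQne
      (Metric.continuous_infDist_pt P).continuousOn
    have hr : Metric.infDist x₀ P < Real.sqrt 2 := hQgood x₀ hx₀Q
    have hle : Metric.hausdorffDist Q P ≤ Metric.infDist x₀ P := by
      apply Metric.hausdorffDist_le_of_infDist Metric.infDist_nonneg
      · intro x hx; exact hmax hx
      · intro y hy
        have h0 : Metric.infDist y Q ≤ 0 := by
          have h' : Metric.infDist y Q ≤ dist y y :=
            Metric.infDist_le_dist_of_mem (hPQ hy)
          rwa [dist_self] at h'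
        exact h0.trans Metric.infDist_nonneg
    exact lt_of_le_of_lt hle hr
end

section
/- Let P be a closed subset of ℝ² with nonempty complement, and let x ∈ P be a point with Metric.infDist x (Pᶜ) ≥ Real.sqrt 2. Then x belongs to the interior of the union of all closed unit lattice squares contained in P, where a closed unit lattice square is a set of the form [m, m+1] × [k, k+1] with m, k integers. In particular, every point of P not in the interior of this union lies at distance less than √2 from the complement of P. -/
/-- The closed unit lattice square `[m, m+1] × [k, k+1]` (as a subset of the
Euclidean plane). -/
def UnitLatticeSquare (m k : ℤ) : Set (EuclideanSpace ℝ (Fin 2)) :=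
  {p | p 0 ∈ Set.Icc (m : ℝ) (m + 1) ∧ p 1 ∈ Set.Icc (k : ℝ) (k + 1)}

/-- `L(P)`: the union of all closed unit lattice squares contained in `P`. -/
def LatticeSquareUnion (P : Set (EuclideanSpace ℝ (Fin 2))) :
    Set (EuclideanSpace ℝ (Fin 2)) :=
  ⋃ (m : ℤ) (k : ℤ) (_ : UnitLatticeSquare m k ⊆ P), UnitLatticeSquare m k

/-!
The closed ball of radius `√2 = diam [0,1]²` about `x` lies in `P`, hence so does every lattice
square through `x`. Every point `y` close enough to `x` lies in the square
`[⌊y₀⌋, ⌊y₀⌋ + 1] × [⌊y₁⌋, ⌊y₁⌋ + 1]`, which also contains `x`; so `L(P)` is a neighbourhood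
of `x`.
-/

open Metric Set Filter Topology

lemma mem_Icc_floor_of_mem_Ioo {a b : ℝ} (hb : b ∈ Ioo ((⌈a⌉ : ℝ) - 1) (⌊a⌋ + 1)) :
    a ∈ Icc (⌊b⌋ : ℝ) (⌊b⌋ + 1) := by
  obtain ⟨hlo, hhi⟩ := hb
  have hb_lt : ⌊b⌋ < ⌊a⌋ + 1 := Int.floor_lt.2 (by exact_mod_cast hhi)
  have hb_ge : ⌈a⌉ - 1 ≤ ⌊b⌋ := Int.le_floor.2 (by exact_mod_cast hlo.le)
  have : (⌊b⌋ : ℝ) ≤ ⌊a⌋ := by exact_mod_cast (by omega : ⌊b⌋ ≤ ⌊a⌋)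
  have : (⌈a⌉ : ℝ) ≤ ⌊b⌋ + 1 := by exact_mod_cast (by omega : ⌈a⌉ ≤ ⌊b⌋ + 1)
  exact ⟨by linarith [Int.floor_le a], by linarith [Int.le_ceil a]⟩

lemma mem_unitLatticeSquare_floor (y : EuclideanSpace ℝ (Fin 2)) :
    y ∈ UnitLatticeSquare ⌊y 0⌋ ⌊y 1⌋ :=
  ⟨⟨Int.floor_le _, (Int.lt_floor_add_one _).le⟩,
    Int.floor_le _, (Int.lt_floor_add_one _).le⟩

lemma eventually_mem_unitLatticeSquare (x : EuclideanSpace ℝ (Fin 2)) :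
    ∀ᶠ y in 𝓝 x, ∃ m k : ℤ, x ∈ UnitLatticeSquare m k ∧ y ∈ UnitLatticeSquare m k := by
  have hnhds (i : Fin 2) : ∀ᶠ y : EuclideanSpace ℝ (Fin 2) in 𝓝 x,
      y i ∈ Ioo ((⌈x i⌉ : ℝ) - 1) (⌊x i⌋ + 1) :=
    (PiLp.continuous_apply 2 _ i).continuousAt.eventually_mem <|
      Ioo_mem_nhds (by linarith [Int.ceil_lt_add_one (x i)]) (Int.lt_floor_add_one (x i))
  filter_upwards [hnhds 0, hnhds 1] with y hy₀ hy₁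
  exact ⟨⌊y 0⌋, ⌊y 1⌋, ⟨mem_Icc_floor_of_mem_Ioo hy₀, mem_Icc_floor_of_mem_Ioo hy₁⟩,
    mem_unitLatticeSquare_floor y⟩

lemma unitLatticeSquare_subset_closedBall {m k : ℤ} {x : EuclideanSpace ℝ (Fin 2)}
    (hx : x ∈ UnitLatticeSquare m k) :
    UnitLatticeSquare m k ⊆ closedBall x (Real.sqrt 2) := by
  intro z hz
  have hsq {n : ℝ} {a b : ℝ} (ha : a ∈ Icc n (n + 1)) (hb : b ∈ Icc n (n + 1)) :
      dist a b ^ 2 ≤ 1 :=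
    pow_le_one₀ dist_nonneg <| by simpa using Real.dist_le_of_mem_Icc ha hb
  rw [mem_closedBall, EuclideanSpace.dist_eq, Fin.sum_univ_two]
  gcongr
  linarith [hsq hz.1 hx.1, hsq hz.2 hx.2]

lemma mem_interior_latticeSquareUnion {P : Set (EuclideanSpace ℝ (Fin 2))} (hP : IsClosed P)
    {x : EuclideanSpace ℝ (Fin 2)} (hx : x ∈ P) (hfar : Real.sqrt 2 ≤ infDist x Pᶜ) :
    x ∈ interior (LatticeSquareUnion P) := by
  have hball : closedBall x (Real.sqrt 2) ⊆ P :=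
    hP.closure_eq ▸ (closedBall_subset_closedBall hfar).trans
      (closedBall_infDist_compl_subset_closure hx)
  rw [mem_interior_iff_mem_nhds]
  filter_upwards [eventually_mem_unitLatticeSquare x] with y ⟨m, k, hxS, hyS⟩
  exact mem_iUnion.2 ⟨m, mem_iUnion₂.2
    ⟨k, (unitLatticeSquare_subset_closedBall hxS).trans hball, hyS⟩⟩

theorem far_point_mem_interior_latticeSquareUnion_general
    (P : Set (EuclideanSpace ℝ (Fin 2))) (hP : IsClosed P) :
    (∀ x ∈ P, Real.sqrt 2 ≤ Metric.infDist x (Pᶜ) →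
      x ∈ interior (LatticeSquareUnion P)) ∧
    (∀ y ∈ P, y ∉ interior (LatticeSquareUnion P) →
      Metric.infDist y (Pᶜ) < Real.sqrt 2) :=
  ⟨fun _ hx => mem_interior_latticeSquareUnion hP hx, fun _ hy hy_int =>
    lt_of_not_ge fun hfar => hy_int (mem_interior_latticeSquareUnion hP hy hfar)⟩

/-- Supporting claim of Lemma `hausdorff`: a point of a closed set `P` at
distance at least `√2` from the complement of `P` lies in the interior of
`L(P)`; in particular every point of `P \ (L(P))°` is at distance less than
`√2` from `Pᶜ`. -/
theorem far_point_mem_interior_latticeSquareUnion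
    (P : Set (EuclideanSpace ℝ (Fin 2))) (hP : IsClosed P)
    (hPc : (Pᶜ).Nonempty) :
    (∀ x ∈ P, Real.sqrt 2 ≤ Metric.infDist x (Pᶜ) →
      x ∈ interior (LatticeSquareUnion P)) ∧
    (∀ y ∈ P, y ∉ interior (LatticeSquareUnion P) →
      Metric.infDist y (Pᶜ) < Real.sqrt 2) :=
  far_point_mem_interior_latticeSquareUnion_general P hP
end
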